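/- Let T > 0, N₀ ∈ ℕ, c > 0, and for each ε ∈ (0, 1] let m_ε, m̃_ε : ℝ → ℝ be continuous, bounded and non-negative, let u_ε be a classical solution on [0, T] of the wave equation with potential m_ε and source f = 0, and let ũ_ε be a classical solution on [0, T] of the wave equation with potential m̃_ε and source f = 0, with u_ε(0, ·) = ũ_ε(0, ·) and ∂_t u_ε(0, ·) = ∂_t ũ_ε(0, ·). Assume that for every k ∈ ℕ there exists C_k > 0 with sup_{x ∈ ℝ} |m_ε(x) − m̃_ε(x)| ≤ C_k ε^k for all ε ∈ (0, 1], and that sup_{t ∈ [0, T]} ‖ũ_ε(t, ·)‖_{L²(ℝ)} ≤ c ε^{-N₀} for all ε ∈ (0, 1]. Then for every N ∈ ℕ there exists C_N > 0 such that sup_{t ∈ [0, T]} ‖u_ε(t, ·) − ũ_ε(t, ·)‖_{L²(ℝ)} ≤ C_N ε^N for all ε ∈ (0, 1]. -/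

import Mathlib

/-!
The difference `w = u_ε - ũ_ε` solves the wave equation with potential `m_ε`, source
`g = (m̃_ε - m_ε) ũ_ε` and zero Cauchy data. On a slab `[-a, a]` containing the supports, the
energy `E(t) = ∫ w² + (∂ₜw)² + (∂ₓw)² + m_ε w²` satisfies `E' = ∫ 2 w ∂ₜw + 2 ∂ₜw g ≤ 2E + ‖g‖²`,
because the remaining term `2 ∂ₓ(∂ₜw ∂ₓw)` integrates to zero. Grönwall then bounds
`‖w(t)‖² ≤ E(t)` by `e^{2T} sup ‖g‖² / 2`, and `‖g‖ ≤ ‖m_ε - m̃_ε‖_∞ ‖ũ_ε‖ = O(ε^{k - N₀})`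
for every `k`.
-/

open MeasureTheory

/-- A classical solution on `[0,T]` of the wave equation with potential `m`
and source `f`: a `C²` function `u : ℝ × ℝ → ℝ` vanishing for `|x| ≥ R`
(for some `R > 0`) when `t ∈ [0,T]`, satisfying
`∂_t² u = ∂_x² u − m(x) u + f(t,x)` on `[0,T] × ℝ`. -/
def IsClassicalSolution (T : ℝ) (m : ℝ → ℝ) (f : ℝ → ℝ → ℝ) (u : ℝ → ℝ → ℝ) : Prop :=
  ContDiff ℝ 2 (fun p : ℝ × ℝ => u p.1 p.2) ∧
  (∃ R > (0 : ℝ), ∀ t ∈ Set.Icc (0 : ℝ) T, ∀ x : ℝ, R ≤ |x| → u t x = 0) ∧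
  ∀ t ∈ Set.Icc (0 : ℝ) T, ∀ x : ℝ,
    iteratedDeriv 2 (fun τ => u τ x) t =
      iteratedDeriv 2 (fun y => u t y) x - m x * u t x + f t x

section PartialDerivatives

variable {E : Type*} [NormedAddCommGroup E] [NormedSpace ℝ E] {F : ℝ × ℝ → E}

noncomputable def partialT (F : ℝ × ℝ → E) (p : ℝ × ℝ) : E := fderiv ℝ F p (1, 0)

noncomputable def partialX (F : ℝ × ℝ → E) (p : ℝ × ℝ) : E := fderiv ℝ F p (0, 1)

theorem hasDerivAt_partialT {t x : ℝ} (hF : DifferentiableAt ℝ F (t, x)) :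
    HasDerivAt (fun τ => F (τ, x)) (partialT F (t, x)) t :=
  hF.hasFDerivAt.comp_hasDerivAt t ((hasDerivAt_id t).prodMk (hasDerivAt_const t x))

theorem hasDerivAt_partialX {t x : ℝ} (hF : DifferentiableAt ℝ F (t, x)) :
    HasDerivAt (fun y => F (t, y)) (partialX F (t, x)) x :=
  hF.hasFDerivAt.comp_hasDerivAt x ((hasDerivAt_const x t).prodMk (hasDerivAt_id x))

theorem ContDiff.partialT {m n : WithTop ℕ∞} (hF : ContDiff ℝ n F) (hmn : m + 1 ≤ n) :
    ContDiff ℝ m (partialT F) :=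
  (hF.fderiv_right hmn).clm_apply contDiff_const

theorem ContDiff.partialX {m n : WithTop ℕ∞} (hF : ContDiff ℝ n F) (hmn : m + 1 ≤ n) :
    ContDiff ℝ m (partialX F) :=
  (hF.fderiv_right hmn).clm_apply contDiff_const

theorem partialX_partialT (hF : ContDiff ℝ 2 F) (p : ℝ × ℝ) :
    partialX (partialT F) p = partialT (partialX F) p := by
  have hF' : Differentiable ℝ (fderiv ℝ F) :=
    (hF.fderiv_right (m := 1) (by norm_num)).differentiable (by norm_num)
  have happly : ∀ v w : ℝ × ℝ,
      fderiv ℝ (fun q => fderiv ℝ F q v) p w = fderiv ℝ (fderiv ℝ F) p w v := by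
    intro v w
    rw [fderiv_clm_apply (hF' p) (differentiableAt_const v)]
    simp
  exact (happly _ _).trans
    ((hF.contDiffAt.isSymmSndFDerivAt (by simp) _ _).trans (happly _ _).symm)

theorem iteratedDeriv_two_eq_partialT_partialT (hF : ContDiff ℝ 2 F) (t x : ℝ) :
    iteratedDeriv 2 (fun τ => F (τ, x)) t = partialT (partialT F) (t, x) := by
  have hderiv : deriv (fun τ => F (τ, x)) = fun τ => partialT F (τ, x) :=
    funext fun τ => (hasDerivAt_partialT (hF.differentiable (by norm_num) _)).deriv
  rw [iteratedDeriv_succ, iteratedDeriv_one, hderiv]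
  exact (hasDerivAt_partialT ((hF.partialT (m := 1) (by norm_num)).differentiable
    (by norm_num) _)).deriv

theorem iteratedDeriv_two_eq_partialX_partialX (hF : ContDiff ℝ 2 F) (t x : ℝ) :
    iteratedDeriv 2 (fun y => F (t, y)) x = partialX (partialX F) (t, x) := by
  have hderiv : deriv (fun y => F (t, y)) = fun y => partialX F (t, y) :=
    funext fun y => (hasDerivAt_partialX (hF.differentiable (by norm_num) _)).deriv
  rw [iteratedDeriv_succ, iteratedDeriv_one, hderiv]
  exact (hasDerivAt_partialX ((hF.partialX (m := 1) (by norm_num)).differentiable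
    (by norm_num) _)).deriv

theorem partialX_eq_zero_of_vanishing {t x R : ℝ} (hF : DifferentiableAt ℝ F (t, x))
    (hvan : ∀ y, R ≤ |y| → F (t, y) = 0) (hx : R < |x|) : partialX F (t, x) = 0 := by
  have hev : (fun y => F (t, y)) =ᶠ[nhds x] fun _ => 0 :=
    Filter.eventually_of_mem ((isOpen_lt continuous_const continuous_abs).mem_nhds hx)
      fun y hy => hvan y hy.le
  rw [← (hasDerivAt_partialX hF).deriv, hev.deriv_eq, deriv_const]

end PartialDerivatives

section Integrals

variable {E : Type*} [NormedAddCommGroup E] [NormedSpace ℝ E]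

theorem hasDerivAt_intervalIntegral_of_continuous {G G' : ℝ × ℝ → E} (hG : Continuous G)
    (hG' : Continuous G') (hderiv : ∀ t x, HasDerivAt (fun τ => G (τ, x)) (G' (t, x)) t)
    (a b t₀ : ℝ) :
    HasDerivAt (fun t => ∫ x in a..b, G (t, x)) (∫ x in a..b, G' (t₀, x)) t₀ := by
  obtain ⟨C, hC⟩ := ((isCompact_closedBall t₀ 1).prod
    (isCompact_uIcc (a := a) (b := b))).exists_bound_of_continuousOn hG'.continuousOn
  refine (intervalIntegral.hasDerivAt_integral_of_dominated_loc_of_deriv_le (μ := volume)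
    (F := fun t x => G (t, x)) (F' := fun t x => G' (t, x)) (bound := fun _ => C)
    (Metric.ball_mem_nhds t₀ one_pos) (.of_forall fun τ => ?_) ?_ ?_ ?_
    intervalIntegrable_const ?_).2
  · exact (hG.comp (Continuous.prodMk_right τ)).aestronglyMeasurable
  · exact (hG.comp (Continuous.prodMk_right t₀)).intervalIntegrable _ _
  · exact (hG'.comp (Continuous.prodMk_right t₀)).aestronglyMeasurable
  · exact .of_forall fun x hx τ hτ =>
      hC (τ, x) ⟨Metric.ball_subset_closedBall hτ, Set.uIoc_subset_uIcc hx⟩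
  · exact .of_forall fun x _ τ _ => hderiv τ x

theorem intervalIntegral_eq_integral_of_vanishing {f : ℝ → E} {a : ℝ} (ha : 0 ≤ a)
    (hf : ∀ x, a ≤ |x| → f x = 0) :
    ∫ x in -a..a, f x = ∫ x, f x := by
  rw [intervalIntegral.integral_of_le (by linarith)]
  refine setIntegral_eq_integral_of_forall_compl_eq_zero fun x hx => hf x ?_
  rw [Set.mem_Ioc, not_and_or, not_lt, not_le] at hx
  exact le_abs'.2 (hx.imp_right le_of_lt)

theorem hasCompactSupport_of_vanishing {M : Type*} [Zero M] {f : ℝ → M} {R : ℝ}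
    (hf : ∀ x, R ≤ |x| → f x = 0) : HasCompactSupport f :=
  HasCompactSupport.intro (isCompact_Icc (a := -R) (b := R)) fun x hx =>
    hf x (not_le.1 (mt abs_le.1 hx)).le

end Integrals

theorem le_div_mul_exp_of_abs_deriv_le {f f' : ℝ → ℝ} {K G T : ℝ} (hK : 0 < K) (hG : 0 ≤ G)
    (hf : ∀ t ∈ Set.Icc 0 T, HasDerivAt f (f' t) t) (hf₀ : f 0 = 0)
    (hbound : ∀ t ∈ Set.Ico 0 T, |f' t| ≤ K * |f t| + G) :
    ∀ t ∈ Set.Icc 0 T, f t ≤ G / K * Real.exp (K * T) := by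
  intro t ht
  have hgron := norm_le_gronwallBound_of_norm_deriv_right_le (δ := 0)
    (fun s hs => (hf s hs).continuousAt.continuousWithinAt)
    (fun s hs => (hf s (Set.Ico_subset_Icc_self hs)).hasDerivWithinAt)
    (by simp [hf₀]) hbound t ht
  simp only [gronwallBound_of_K_ne_0 hK.ne', sub_zero, zero_mul, zero_add] at hgron
  calc f t ≤ ‖f t‖ := Real.le_norm_self _
    _ ≤ G / K * (Real.exp (K * t) - 1) := hgron
    _ ≤ G / K * Real.exp (K * T) := by
        refine mul_le_mul_of_nonneg_left ?_ (div_nonneg hG hK.le)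
        linarith [Real.exp_le_exp.2 (mul_le_mul_of_nonneg_left ht.2 hK.le)]

section WaveEnergy

variable {F : ℝ × ℝ → ℝ} {m : ℝ → ℝ}

noncomputable def waveEnergyDensity (m : ℝ → ℝ) (F : ℝ × ℝ → ℝ) (p : ℝ × ℝ) : ℝ :=
  F p ^ 2 + partialT F p ^ 2 + partialX F p ^ 2 + m p.2 * F p ^ 2

noncomputable def waveEnergy (m : ℝ → ℝ) (F : ℝ × ℝ → ℝ) (a t : ℝ) : ℝ :=
  ∫ x in -a..a, waveEnergyDensity m F (t, x)

theorem sq_le_waveEnergyDensity (hm : ∀ x, 0 ≤ m x) (p : ℝ × ℝ) :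
    F p ^ 2 ≤ waveEnergyDensity m F p := by
  have := mul_nonneg (hm p.2) (sq_nonneg (F p))
  unfold waveEnergyDensity
  nlinarith [sq_nonneg (partialT F p), sq_nonneg (partialX F p)]

theorem continuous_waveEnergyDensity (hF : ContDiff ℝ 1 F) (hm : Continuous m) :
    Continuous (waveEnergyDensity m F) := by
  have := hF.continuous
  have := (hF.partialT (m := 0) (by norm_num)).continuous
  have := (hF.partialX (m := 0) (by norm_num)).continuous
  unfold waveEnergyDensity
  fun_prop

theorem waveEnergy_nonneg (hm : ∀ x, 0 ≤ m x) {a : ℝ} (ha : 0 ≤ a) (t : ℝ) :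
    0 ≤ waveEnergy m F a t :=
  intervalIntegral.integral_nonneg (by linarith) fun _ _ =>
    (sq_nonneg _).trans (sq_le_waveEnergyDensity hm _)

theorem waveEnergy_eq_zero (hF : Differentiable ℝ F) {a t : ℝ} (h₀ : ∀ x, F (t, x) = 0)
    (h₁ : ∀ x, partialT F (t, x) = 0) : waveEnergy m F a t = 0 := by
  have hX : ∀ x, partialX F (t, x) = 0 := fun x => by
    have := hasDerivAt_partialX (hF (t, x))
    rw [show (fun y => F (t, y)) = fun _ => 0 from funext h₀] at this
    exact this.unique (hasDerivAt_const x 0)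
  simp [waveEnergy, waveEnergyDensity, h₀, h₁, hX]

theorem hasDerivAt_waveEnergy (hF : ContDiff ℝ 2 F) (hm : Continuous m) (a t : ℝ) :
    HasDerivAt (waveEnergy m F a) (∫ x in -a..a,
      (2 * F (t, x) * partialT F (t, x) + 2 * partialT F (t, x) * partialT (partialT F) (t, x)
        + 2 * partialX F (t, x) * partialT (partialX F) (t, x)
        + m x * (2 * F (t, x) * partialT F (t, x)))) t := by
  have hF₁ : ContDiff ℝ 1 (partialT F) := hF.partialT (by norm_num)
  have hF₂ : ContDiff ℝ 1 (partialX F) := hF.partialX (by norm_num)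
  refine hasDerivAt_intervalIntegral_of_continuous (G' := fun p => 2 * F p * partialT F p
      + 2 * partialT F p * partialT (partialT F) p + 2 * partialX F p * partialT (partialX F) p
      + m p.2 * (2 * F p * partialT F p))
    (continuous_waveEnergyDensity (hF.of_le (by norm_num)) hm) ?_ (fun τ x => ?_) (-a) a t
  · have := hF.continuous
    have := hF₁.continuous
    have := (hF₁.partialT (m := 0) (by norm_num)).continuous
    have := (hF₂.partialT (m := 0) (by norm_num)).continuous
    fun_prop
  · have hd : ∀ {G : ℝ × ℝ → ℝ}, ContDiff ℝ 1 G → HasDerivAt (fun τ => G (τ, x)) _ τ :=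
      fun hG => hasDerivAt_partialT (hG.differentiable one_ne_zero _)
    convert ((((hd (hF.of_le one_le_two)).pow 2).add ((hd hF₁).pow 2)).add ((hd hF₂).pow 2)).add
      (((hd (hF.of_le one_le_two)).pow 2).const_mul (m x)) using 1
    · rfl
    · push_cast
      ring

theorem hasDerivAt_waveEnergy_of_wave_eq (hF : ContDiff ℝ 2 F) (hm : Continuous m)
    {g : ℝ → ℝ} (hg : Continuous g) {a t : ℝ}
    (hwave : ∀ x, partialT (partialT F) (t, x) =
      partialX (partialX F) (t, x) - m x * F (t, x) + g x)
    (hleft : partialX F (t, -a) = 0) (hright : partialX F (t, a) = 0) :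
    HasDerivAt (waveEnergy m F a)
      (∫ x in -a..a, (2 * F (t, x) * partialT F (t, x) + 2 * partialT F (t, x) * g x)) t := by
  refine (hasDerivAt_waveEnergy hF hm a t).congr_deriv ?_
  have hF₁ : ContDiff ℝ 1 (partialT F) := hF.partialT (by norm_num)
  have hF₂ : ContDiff ℝ 1 (partialX F) := hF.partialX (by norm_num)
  have := hF.continuous
  have := hF₁.continuous
  have := hF₂.continuous
  have := (hF₁.partialX (m := 0) (by norm_num)).continuous
  have := (hF₂.partialX (m := 0) (by norm_num)).continuous
  -- `∂ₜ` of the energy density is the source term plus `2 ∂ₓ(∂ₜF ∂ₓF)`, a total derivative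
  have hflux : ∀ x, HasDerivAt (fun y => partialT F (t, y) * partialX F (t, y))
      (partialX (partialT F) (t, x) * partialX F (t, x)
        + partialT F (t, x) * partialX (partialX F) (t, x)) x := fun x =>
    (hasDerivAt_partialX (hF₁.differentiable one_ne_zero _)).mul
      (hasDerivAt_partialX (hF₂.differentiable one_ne_zero _))
  have hflux_int : ∫ x in -a..a, (partialX (partialT F) (t, x) * partialX F (t, x)
      + partialT F (t, x) * partialX (partialX F) (t, x)) = 0 := by
    rw [intervalIntegral.integral_eq_sub_of_hasDerivAt (fun x _ => hflux x)
      (Continuous.intervalIntegrable (by fun_prop) _ _)]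
    simp [hleft, hright]
  have hsplit : ∀ x, 2 * F (t, x) * partialT F (t, x)
      + 2 * partialT F (t, x) * partialT (partialT F) (t, x)
      + 2 * partialX F (t, x) * partialT (partialX F) (t, x)
      + m x * (2 * F (t, x) * partialT F (t, x))
      = (2 * F (t, x) * partialT F (t, x) + 2 * partialT F (t, x) * g x)
        + 2 * (partialX (partialT F) (t, x) * partialX F (t, x)
          + partialT F (t, x) * partialX (partialX F) (t, x)) := by
    intro x
    rw [hwave x, partialX_partialT hF]
    ring
  simp_rw [hsplit]
  rw [intervalIntegral.integral_add (Continuous.intervalIntegrable (by fun_prop) _ _)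
    (Continuous.intervalIntegrable (by fun_prop) _ _), intervalIntegral.integral_const_mul,
    hflux_int, mul_zero, add_zero]

theorem abs_integral_le_two_mul_waveEnergy_add (hF : ContDiff ℝ 1 F) (hm : Continuous m)
    (hm₀ : ∀ x, 0 ≤ m x) {g : ℝ → ℝ} (hg : Continuous g) {a : ℝ} (ha : 0 ≤ a) (t : ℝ) :
    |∫ x in -a..a, (2 * F (t, x) * partialT F (t, x) + 2 * partialT F (t, x) * g x)| ≤
      2 * waveEnergy m F a t + ∫ x in -a..a, g x ^ 2 := by
  have := continuous_waveEnergyDensity hF hm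
  have := hF.continuous
  have := (hF.partialT (m := 0) (by norm_num)).continuous
  have hpt : ∀ x, |2 * F (t, x) * partialT F (t, x) + 2 * partialT F (t, x) * g x| ≤
      2 * waveEnergyDensity m F (t, x) + g x ^ 2 := by
    intro x
    have := mul_nonneg (hm₀ x) (sq_nonneg (F (t, x)))
    unfold waveEnergyDensity
    rw [abs_le]
    constructor <;> nlinarith [sq_nonneg (F (t, x) + partialT F (t, x)),
      sq_nonneg (F (t, x) - partialT F (t, x)), sq_nonneg (partialT F (t, x) + g x),
      sq_nonneg (partialT F (t, x) - g x), sq_nonneg (partialX F (t, x))]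
  calc _ ≤ ∫ x in -a..a, |2 * F (t, x) * partialT F (t, x) + 2 * partialT F (t, x) * g x| :=
        intervalIntegral.abs_integral_le_integral_abs (by linarith)
    _ ≤ ∫ x in -a..a, (2 * waveEnergyDensity m F (t, x) + g x ^ 2) :=
        intervalIntegral.integral_mono_on (by linarith)
          (Continuous.intervalIntegrable (by fun_prop) _ _)
          (Continuous.intervalIntegrable (by fun_prop) _ _) fun x _ => hpt x
    _ = _ := by
        rw [intervalIntegral.integral_add (Continuous.intervalIntegrable (by fun_prop) _ _)
          (Continuous.intervalIntegrable (by fun_prop) _ _), intervalIntegral.integral_const_mul]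
        rfl

end WaveEnergy

section ClassicalSolution

variable {T : ℝ} {m : ℝ → ℝ} {f : ℝ → ℝ → ℝ} {u : ℝ → ℝ → ℝ}

theorem IsClassicalSolution.wave_eq (hu : IsClassicalSolution T m f u) {t : ℝ}
    (ht : t ∈ Set.Icc 0 T) (x : ℝ) :
    partialT (partialT fun p : ℝ × ℝ => u p.1 p.2) (t, x) =
      partialX (partialX fun p : ℝ × ℝ => u p.1 p.2) (t, x) - m x * u t x + f t x := by
  rw [← iteratedDeriv_two_eq_partialT_partialT hu.1, ← iteratedDeriv_two_eq_partialX_partialX hu.1]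
  exact hu.2.2 t ht x

theorem IsClassicalSolution.integrable_sq (hu : IsClassicalSolution T m f u) {t : ℝ}
    (ht : t ∈ Set.Icc 0 T) : Integrable fun x => u t x ^ 2 := by
  obtain ⟨R, -, hR⟩ := hu.2.1
  have hcont : Continuous fun x => u t x := hu.1.continuous.comp (Continuous.prodMk_right t)
  exact (hcont.pow 2).integrable_of_hasCompactSupport
    (hasCompactSupport_of_vanishing (R := R) fun x hx => by simp [hR t ht x hx])

theorem IsClassicalSolution.sub {m' : ℝ → ℝ} {u' : ℝ → ℝ → ℝ}
    (hu : IsClassicalSolution T m f u) (hu' : IsClassicalSolution T m' f u') :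
    IsClassicalSolution T m (fun t x => (m' x - m x) * u' t x) (fun t x => u t x - u' t x) := by
  obtain ⟨hC, ⟨R, hR, hvan⟩, hwave⟩ := hu
  obtain ⟨hC', ⟨R', -, hvan'⟩, hwave'⟩ := hu'
  refine ⟨hC.sub hC', ⟨max R R', lt_max_of_lt_left hR, fun t ht x hx => ?_⟩, fun t ht x => ?_⟩
  · show u t x - u' t x = 0
    rw [hvan t ht x ((le_max_left _ _).trans hx), hvan' t ht x ((le_max_right _ _).trans hx),
      sub_zero]
  · have hslice : ∀ {v : ℝ → ℝ → ℝ}, ContDiff ℝ 2 (fun p : ℝ × ℝ => v p.1 p.2) →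
        ContDiff ℝ 2 (fun τ => v τ x) ∧ ContDiff ℝ 2 (fun y => v t y) := fun hv =>
      ⟨hv.comp (contDiff_id.prodMk contDiff_const), hv.comp (contDiff_const.prodMk contDiff_id)⟩
    rw [iteratedDeriv_fun_sub (hslice hC).1.contDiffAt (hslice hC').1.contDiffAt,
      iteratedDeriv_fun_sub (hslice hC).2.contDiffAt (hslice hC').2.contDiffAt,
      hwave t ht x, hwave' t ht x]
    ring

theorem IsClassicalSolution.integral_sq_le {G : ℝ} {g w : ℝ → ℝ → ℝ}
    (hw : IsClassicalSolution T m g w) (hm : Continuous m) (hm₀ : ∀ x, 0 ≤ m x)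
    (hg : Continuous fun p : ℝ × ℝ => g p.1 p.2)
    (hg_int : ∀ t ∈ Set.Icc 0 T, Integrable fun x => g t x ^ 2)
    (hG : ∀ t ∈ Set.Icc 0 T, ∫ x, g t x ^ 2 ≤ G)
    (hw₀ : ∀ x, w 0 x = 0) (hw₁ : ∀ x, deriv (fun τ => w τ x) 0 = 0) {t : ℝ}
    (ht : t ∈ Set.Icc 0 T) : ∫ x, w t x ^ 2 ≤ G / 2 * Real.exp (2 * T) := by
  obtain ⟨R, hR, hvan⟩ := hw.2.1
  have hC := hw.1
  set F : ℝ × ℝ → ℝ := fun p => w p.1 p.2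
  set a := R + 1
  have hF : ∀ p, DifferentiableAt ℝ F p := hC.differentiable two_ne_zero
  have hgt : ∀ s, Continuous fun x => g s x := fun s => hg.comp (Continuous.prodMk_right s)
  have hRa : R < |a| := by rw [abs_of_pos (by positivity)]; linarith
  have hderiv : ∀ s ∈ Set.Icc 0 T, HasDerivAt (waveEnergy m F a) (∫ x in -a..a,
      (2 * F (s, x) * partialT F (s, x) + 2 * partialT F (s, x) * g s x)) s := fun s hs =>
    hasDerivAt_waveEnergy_of_wave_eq hC hm (hgt s) (hw.wave_eq hs)
      (partialX_eq_zero_of_vanishing (hF _) (hvan s hs) (by rwa [abs_neg]))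
      (partialX_eq_zero_of_vanishing (hF _) (hvan s hs) hRa)
  have henergy₀ : waveEnergy m F a 0 = 0 := waveEnergy_eq_zero hF hw₀
    fun x => (hasDerivAt_partialT (hF (0, x))).deriv.symm.trans (hw₁ x)
  have hG₀ : 0 ≤ G := (integral_nonneg fun x => sq_nonneg (g t x)).trans (hG t ht)
  have hslab : ∀ s ∈ Set.Icc 0 T, ∫ x in -a..a, g s x ^ 2 ≤ G := fun s hs => by
    rw [intervalIntegral.integral_of_le (by linarith)]
    exact (setIntegral_le_integral (hg_int s hs) (.of_forall fun x => sq_nonneg _)).trans (hG s hs)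
  have hbound : ∀ s ∈ Set.Ico 0 T, |∫ x in -a..a,
      (2 * F (s, x) * partialT F (s, x) + 2 * partialT F (s, x) * g s x)| ≤
        2 * |waveEnergy m F a s| + G := fun s hs => by
    rw [abs_of_nonneg (waveEnergy_nonneg hm₀ (by linarith) s)]
    linarith [abs_integral_le_two_mul_waveEnergy_add (hC.of_le one_le_two) hm hm₀ (hgt s)
      (by linarith : (0 : ℝ) ≤ a) s, hslab s (Set.Ico_subset_Icc_self hs)]
  calc ∫ x, w t x ^ 2 = ∫ x in -a..a, F (t, x) ^ 2 :=
        (intervalIntegral_eq_integral_of_vanishing (by linarith) fun x hx => by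
          simp [hvan t ht x (by linarith)]).symm
    _ ≤ waveEnergy m F a t :=
        intervalIntegral.integral_mono_on (by linarith)
          (((hC.continuous.comp (Continuous.prodMk_right t)).pow 2).intervalIntegrable _ _)
          (((continuous_waveEnergyDensity (hC.of_le one_le_two) hm).comp
            (Continuous.prodMk_right t)).intervalIntegrable _ _)
          fun x _ => sq_le_waveEnergyDensity hm₀ _
    _ ≤ G / 2 * Real.exp (2 * T) :=
        le_div_mul_exp_of_abs_deriv_le two_pos hG₀ hderiv henergy₀ hbound t ht

theorem IsClassicalSolution.integral_sq_sub_le {m' : ℝ → ℝ} {u' : ℝ → ℝ → ℝ} {B K : ℝ}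
    (hu : IsClassicalSolution T m f u) (hu' : IsClassicalSolution T m' f u')
    (hm : Continuous m) (hm₀ : ∀ x, 0 ≤ m x) (hm' : Continuous m')
    (hmm' : ∀ x, |m x - m' x| ≤ B) (hK : ∀ t ∈ Set.Icc 0 T, ∫ x, u' t x ^ 2 ≤ K)
    (h₀ : ∀ x, u 0 x = u' 0 x)
    (h₁ : ∀ x, deriv (fun τ => u τ x) 0 = deriv (fun τ => u' τ x) 0) {t : ℝ}
    (ht : t ∈ Set.Icc 0 T) :
    ∫ x, (u t x - u' t x) ^ 2 ≤ B ^ 2 * K / 2 * Real.exp (2 * T) := by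
  set g : ℝ → ℝ → ℝ := fun s x => (m' x - m x) * u' s x
  have hg : Continuous fun p : ℝ × ℝ => g p.1 p.2 :=
    ((hm'.comp continuous_snd).sub (hm.comp continuous_snd)).mul hu'.1.continuous
  have hg_le : ∀ s x, g s x ^ 2 ≤ B ^ 2 * u' s x ^ 2 := fun s x => by
    rw [mul_pow, ← sq_abs (m' x - m x), abs_sub_comm]
    gcongr
    exact hmm' x
  have hu'_int := fun s (hs : s ∈ Set.Icc 0 T) => (hu'.integrable_sq hs).const_mul (B ^ 2)
  have hg_int : ∀ s ∈ Set.Icc 0 T, Integrable fun x => g s x ^ 2 := fun s hs =>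
    (hu'_int s hs).mono' ((hg.comp (Continuous.prodMk_right s)).pow 2).aestronglyMeasurable
      (.of_forall fun x => by rw [Real.norm_of_nonneg (sq_nonneg _)]; exact hg_le s x)
  have hG : ∀ s ∈ Set.Icc 0 T, ∫ x, g s x ^ 2 ≤ B ^ 2 * K := fun s hs => by
    refine (integral_mono_of_nonneg (.of_forall fun x => sq_nonneg _) (hu'_int s hs)
      (.of_forall (hg_le s))).trans ?_
    rw [integral_const_mul]
    exact mul_le_mul_of_nonneg_left (hK s hs) (sq_nonneg _)
  refine (hu.sub hu').integral_sq_le hm hm₀ hg hg_int hG (fun x => sub_eq_zero.2 (h₀ x))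
    (fun x => ?_) ht
  rw [deriv_fun_sub (hasDerivAt_partialT (hu.1.differentiable two_ne_zero (0, x))).differentiableAt
    (hasDerivAt_partialT (hu'.1.differentiable two_ne_zero (0, x))).differentiableAt, h₁ x,
    sub_self]

end ClassicalSolution

theorem very_weak_solution_uniqueness_general
    (T : ℝ) (N₀ : ℕ) (c : ℝ) (hc : 0 < c)
    (m m' : ℝ → ℝ → ℝ) (u u' : ℝ → ℝ → ℝ → ℝ)
    (hreg : ∀ ε ∈ Set.Ioc (0 : ℝ) 1,
      (Continuous (m ε) ∧ (∃ M, ∀ x, |m ε x| ≤ M) ∧ ∀ x, 0 ≤ m ε x) ∧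
      (Continuous (m' ε) ∧ (∃ M, ∀ x, |m' ε x| ≤ M) ∧ ∀ x, 0 ≤ m' ε x))
    (hu : ∀ ε ∈ Set.Ioc (0 : ℝ) 1, IsClassicalSolution T (m ε) (fun _ _ => 0) (u ε))
    (hu' : ∀ ε ∈ Set.Ioc (0 : ℝ) 1, IsClassicalSolution T (m' ε) (fun _ _ => 0) (u' ε))
    (hdata : ∀ ε ∈ Set.Ioc (0 : ℝ) 1, ∀ x : ℝ,
      u ε 0 x = u' ε 0 x ∧
      deriv (fun τ => u ε τ x) 0 = deriv (fun τ => u' ε τ x) 0)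
    (hneg : ∀ k : ℕ, ∃ Ck > (0 : ℝ), ∀ ε ∈ Set.Ioc (0 : ℝ) 1,
      ∀ x : ℝ, |m ε x - m' ε x| ≤ Ck * ε ^ k)
    (hmod : ∀ ε ∈ Set.Ioc (0 : ℝ) 1, ∀ t ∈ Set.Icc (0 : ℝ) T,
      Real.sqrt (∫ x : ℝ, (u' ε t x) ^ 2) ≤ c * (ε ^ N₀)⁻¹) :
    ∀ N : ℕ, ∃ CN > (0 : ℝ), ∀ ε ∈ Set.Ioc (0 : ℝ) 1, ∀ t ∈ Set.Icc (0 : ℝ) T,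
      Real.sqrt (∫ x : ℝ, (u ε t x - u' ε t x) ^ 2) ≤ CN * ε ^ N := by
  intro N
  obtain ⟨C, hC, hmm'⟩ := hneg (N + N₀)
  refine ⟨C * c * Real.exp T, by positivity, fun ε hε t ht => ?_⟩
  obtain ⟨⟨hm, -, hm₀⟩, hm', -, -⟩ := hreg ε hε
  have hε₀ : 0 < ε := hε.1
  have hstab := (hu ε hε).integral_sq_sub_le (hu' ε hε) hm hm₀ hm' (hmm' ε hε)
    (fun s hs => (Real.sqrt_le_iff.1 (hmod ε hε s hs)).2)
    (fun x => (hdata ε hε x).1) (fun x => (hdata ε hε x).2) ht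
  have hrate : C * ε ^ (N + N₀) * (c * (ε ^ N₀)⁻¹) = C * c * ε ^ N := by
    rw [pow_add]
    field_simp
  refine Real.sqrt_le_iff.2 ⟨by positivity, hstab.trans ?_⟩
  calc _ = (C * ε ^ (N + N₀) * (c * (ε ^ N₀)⁻¹)) ^ 2 / 2 * Real.exp (2 * T) := by ring
    _ = (C * c * Real.exp T * ε ^ N) ^ 2 / 2 := by
        rw [hrate, show 2 * T = T + T by ring, Real.exp_add]
        ring
    _ ≤ _ := half_le_self (sq_nonneg _)

/-- Uniqueness of very weak solutions (case `α = 1`, `d = 1`): if the nets of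
regularised potentials differ by a negligible net and the solution net `ũ_ε`
is moderate, then the solution nets differ by a negligible net. -/
theorem very_weak_solution_uniqueness
    (T : ℝ) (hT : 0 < T) (N₀ : ℕ) (c : ℝ) (hc : 0 < c)
    (m m' : ℝ → ℝ → ℝ) (u u' : ℝ → ℝ → ℝ → ℝ)
    (hreg : ∀ ε ∈ Set.Ioc (0 : ℝ) 1,
      (Continuous (m ε) ∧ (∃ M, ∀ x, |m ε x| ≤ M) ∧ ∀ x, 0 ≤ m ε x) ∧
      (Continuous (m' ε) ∧ (∃ M, ∀ x, |m' ε x| ≤ M) ∧ ∀ x, 0 ≤ m' ε x))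
    (hu : ∀ ε ∈ Set.Ioc (0 : ℝ) 1, IsClassicalSolution T (m ε) (fun _ _ => 0) (u ε))
    (hu' : ∀ ε ∈ Set.Ioc (0 : ℝ) 1, IsClassicalSolution T (m' ε) (fun _ _ => 0) (u' ε))
    (hdata : ∀ ε ∈ Set.Ioc (0 : ℝ) 1, ∀ x : ℝ,
      u ε 0 x = u' ε 0 x ∧
      deriv (fun τ => u ε τ x) 0 = deriv (fun τ => u' ε τ x) 0)
    (hneg : ∀ k : ℕ, ∃ Ck > (0 : ℝ), ∀ ε ∈ Set.Ioc (0 : ℝ) 1,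
      ∀ x : ℝ, |m ε x - m' ε x| ≤ Ck * ε ^ k)
    (hmod : ∀ ε ∈ Set.Ioc (0 : ℝ) 1, ∀ t ∈ Set.Icc (0 : ℝ) T,
      Real.sqrt (∫ x : ℝ, (u' ε t x) ^ 2) ≤ c * (ε ^ N₀)⁻¹) :
    ∀ N : ℕ, ∃ CN > (0 : ℝ), ∀ ε ∈ Set.Ioc (0 : ℝ) 1, ∀ t ∈ Set.Icc (0 : ℝ) T,
      Real.sqrt (∫ x : ℝ, (u ε t x - u' ε t x) ^ 2) ≤ CN * ε ^ N :=
  very_weak_solution_uniqueness_general T N₀ c hc m m' u u' hreg hu hu' hdata hneg hmod
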